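/- Let d ≥ 2 be an integer, u > 0, t > 0, and set c = (d-1)²/4. Define H(t, y, y) = e^(-ct) (4πt)^(-1/2) y^(d-1) (1 - exp(-(log(y²/u²))²/(4t))) for y ≥ u. Then the limit as Y → ∞ of ( ∫_u^Y H(t, y, y) y^(-d) dy − e^(-ct) (log Y)/√(4πt) ) exists and equals e^(-ct) ( −(log u)/√(4πt) − 1/4 ). -/
import Mathlib

open Real MeasureTheory Filter Set intervalIntegral

/-- The renormalized limit of the on-diagonal integral of the Dirichlet heat kernel of
    T⁰ = -y² d²/dy² + (d-2) y d/dy on L²([u,∞), y^(-d) dy):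
    lim_{Y→∞} ( ∫_u^Y H(t,y,y) y^(-d) dy − e^(-ct) log Y/√(4πt) )
      = e^(-ct) ( −log u/√(4πt) − 1/4 ),  where c = (d-1)²/4. -/
theorem stmt_6 (d : ℕ) (hd : 2 ≤ d) (u t : ℝ) (hu : 0 < u) (ht : 0 < t) :
    Filter.Tendsto
      (fun Y : ℝ =>
        (∫ y in u..Y,
            Real.exp (-(((d : ℝ) - 1) ^ 2 / 4) * t) * (4 * Real.pi * t) ^ (-(1 : ℝ) / 2) *
              y ^ (d - 1) * (1 - Real.exp (-(Real.log (y ^ 2 / u ^ 2)) ^ 2 / (4 * t))) *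
              y ^ (-(d : ℝ)))
          - Real.exp (-(((d : ℝ) - 1) ^ 2 / 4) * t) * Real.log Y / Real.sqrt (4 * Real.pi * t))
      Filter.atTop
      (nhds (Real.exp (-(((d : ℝ) - 1) ^ 2 / 4) * t) *
        (-(Real.log u) / Real.sqrt (4 * Real.pi * t) - 1 / 4))) := by
  have h4pt : (0:ℝ) < 4 * Real.pi * t := by positivity
  set E : ℝ := Real.exp (-(((d : ℝ) - 1) ^ 2 / 4) * t) with hE
  set C : ℝ := (4 * Real.pi * t) ^ (-(1 : ℝ) / 2) with hCdef
  set S : ℝ := Real.sqrt (4 * Real.pi * t) with hSdef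
  have hS : 0 < S := Real.sqrt_pos.mpr h4pt
  have hC : C = 1 / S := by
    rw [hCdef, hSdef, neg_div, Real.rpow_neg h4pt.le, Real.sqrt_eq_rpow]
    exact (one_div _).symm
  have hSS : S = 2 * Real.sqrt (Real.pi * t) := by
    rw [hSdef, show 4 * Real.pi * t = 2 ^ 2 * (Real.pi * t) by ring,
      Real.sqrt_mul (by positivity), Real.sqrt_sq (by norm_num : (0:ℝ) ≤ 2)]
  have hpt : (0:ℝ) < Real.sqrt (Real.pi * t) := Real.sqrt_pos.mpr (by positivity)
  set g : ℝ → ℝ := fun y =>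
      E * C * y ^ (d - 1) * (1 - Real.exp (-(Real.log (y ^ 2 / u ^ 2)) ^ 2 / (4 * t))) *
        y ^ (-(d : ℝ)) with hg
  -- continuity of g on (0, ∞)
  have hgOn : ContinuousOn g (Set.Ioi (0:ℝ)) := by
    intro y hy
    have hy0 : (0:ℝ) < y := hy
    have h2 : ContinuousAt (fun y : ℝ => Real.log (y ^ 2 / u ^ 2)) y := by
      have hne : y ^ 2 / u ^ 2 ≠ 0 := by positivity
      exact ((continuousAt_id.pow 2).div_const _).log hne
    have hexpCA : ContinuousAt
        (fun y : ℝ => Real.exp (-(Real.log (y ^ 2 / u ^ 2)) ^ 2 / (4 * t))) y :=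
      (((h2.pow 2).neg).div_const _).rexp
    have h1 : ContinuousAt (fun y : ℝ => y ^ (-(d:ℝ))) y :=
      Real.continuousAt_rpow_const y _ (Or.inl hy0.ne')
    exact ((((continuousAt_const.mul (continuousAt_id.pow (d-1))).mul
      (continuousAt_const.sub hexpCA)).mul h1)).continuousWithinAt
  -- pointwise identity after substitution y = u * exp x
  have hpoint : ∀ x : ℝ, (u * Real.exp x) • g (u * Real.exp x)
      = E * C * (1 - Real.exp (-(1/t) * x ^ 2)) := by
    intro x
    have hy : (0:ℝ) < u * Real.exp x := by positivity
    have hlog : Real.log ((u * Real.exp x) ^ 2 / u ^ 2) = 2 * x := by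
      have h1 : (u * Real.exp x) ^ 2 / u ^ 2 = Real.exp (2 * x) := by
        rw [mul_pow, show Real.exp x ^ 2 = Real.exp (2 * x) by
          rw [two_mul, Real.exp_add, sq]]
        field_simp
      rw [h1, Real.log_exp]
    have hpow : (u * Real.exp x) ^ (d - 1) * (u * Real.exp x) ^ (-(d:ℝ)) * (u * Real.exp x)
        = 1 := by
      have h1 : (u * Real.exp x) ^ (d - 1) = (u * Real.exp x) ^ ((d:ℝ) - 1) := by
        rw [← Real.rpow_natCast _ (d - 1)]
        congr 1
        push_cast [Nat.cast_sub (by omega : 1 ≤ d)]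
        ring
      rw [h1, ← Real.rpow_add hy, show ((d:ℝ) - 1) + (-(d:ℝ)) = -1 by ring,
        Real.rpow_neg_one]
      exact inv_mul_cancel₀ hy.ne'
    have hexp : -(Real.log ((u * Real.exp x) ^ 2 / u ^ 2)) ^ 2 / (4 * t)
        = -(1/t) * x ^ 2 := by
      rw [hlog]; field_simp; ring
    simp only [smul_eq_mul, hg, hexp]
    linear_combination (E * C * (1 - Real.exp (-(1/t) * x ^ 2))) * hpow
  -- integrability / gaussian limit facts
  have hb : (0:ℝ) < 1 / t := by positivity
  have hint : IntegrableOn (fun s : ℝ => Real.exp (-(1/t) * s ^ 2)) (Set.Ioi (0:ℝ)) :=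
    (integrable_exp_neg_mul_sq hb).integrableOn
  have hgauss : ∫ s in Set.Ioi (0:ℝ), Real.exp (-(1/t) * s ^ 2)
      = Real.sqrt (Real.pi * t) / 2 := by
    rw [integral_gaussian_Ioi (1/t)]
    congr 2
    field_simp
  have hL : Tendsto (fun Y : ℝ => Real.log (Y / u)) atTop atTop :=
    Real.tendsto_log_atTop.comp (tendsto_id.atTop_div_const hu)
  have hIlim : Tendsto (fun Y : ℝ => ∫ s in (0:ℝ)..Real.log (Y / u),
      Real.exp (-(1/t) * s ^ 2)) atTop (nhds (Real.sqrt (Real.pi * t) / 2)) := by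
    have h1 := MeasureTheory.intervalIntegral_tendsto_integral_Ioi (μ := volume) 0 hint hL
    rwa [hgauss] at h1
  have main : Tendsto (fun Y : ℝ => E * (-Real.log u) / S
      - E * C * ∫ s in (0:ℝ)..Real.log (Y / u), Real.exp (-(1/t) * s ^ 2)) atTop
      (nhds (E * (-(Real.log u) / S - 1 / 4))) := by
    have h0 : Tendsto (fun _ : ℝ => E * (-Real.log u) / S) atTop
        (nhds (E * (-Real.log u) / S)) := tendsto_const_nhds
    have h1 := h0.sub (hIlim.const_mul (E * C))
    convert h1 using 2
    rw [hC, hSS]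
    field_simp
    ring
  refine main.congr' ?_
  filter_upwards [eventually_ge_atTop u] with Y hY
  have hY0 : (0:ℝ) < Y := lt_of_lt_of_le hu hY
  -- change of variables
  have hderiv : ∀ x ∈ Set.uIcc (0:ℝ) (Real.log (Y / u)),
      HasDerivAt (fun s => u * Real.exp s) (u * Real.exp x) x :=
    fun x _ => (Real.hasDerivAt_exp x).const_mul u
  have hcont : ContinuousOn (fun x : ℝ => u * Real.exp x)
      (Set.uIcc (0:ℝ) (Real.log (Y / u))) :=
    (continuous_const.mul Real.continuous_exp).continuousOn
  have himg : (fun x : ℝ => u * Real.exp x) '' Set.uIcc (0:ℝ) (Real.log (Y / u))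
      ⊆ Set.Ioi (0:ℝ) := by
    rintro y ⟨x, -, rfl⟩
    exact mul_pos hu (Real.exp_pos x)
  have hchg := intervalIntegral.integral_comp_smul_deriv' hderiv hcont (hgOn.mono himg)
  simp only [Function.comp] at hchg
  simp only [hpoint] at hchg
  rw [Real.exp_zero, mul_one, Real.exp_log (div_pos hY0 hu),
    mul_div_cancel₀ _ hu.ne'] at hchg
  -- evaluate the left side of hchg
  have hval : ∫ x in (0:ℝ)..Real.log (Y / u), E * C * (1 - Real.exp (-(1/t) * x ^ 2))
      = E * C * Real.log (Y / u)
        - E * C * ∫ s in (0:ℝ)..Real.log (Y / u), Real.exp (-(1/t) * s ^ 2) := by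
    rw [intervalIntegral.integral_const_mul,
      intervalIntegral.integral_sub intervalIntegrable_const
        ((Continuous.intervalIntegrable (by fun_prop) _ _)),
      intervalIntegral.integral_const]
    simp only [smul_eq_mul, mul_one]
    ring
  have hintval : (∫ y in u..Y, g y)
      = E * C * Real.log (Y / u)
        - E * C * ∫ s in (0:ℝ)..Real.log (Y / u), Real.exp (-(1/t) * s ^ 2) := by
    rw [← hchg, hval]
  show E * (-Real.log u) / S
      - E * C * ∫ s in (0:ℝ)..Real.log (Y / u), Real.exp (-(1/t) * s ^ 2)
    = (∫ y in u..Y, g y) - E * Real.log Y / S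
  rw [hintval, Real.log_div hY0.ne' hu.ne', hC]
  field_simp
  ring
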